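/- Assume var(f̂) ≠ 0. For each k ∈ {1,…,d}, the total Sobol' index S_k^tot = 1 − var(E(f̂ | x_l, l ≠ k)) / var(f̂) of the ELM surrogate satisfies S_k^tot = 1 − (1/var(f̂)) Σ_{j=1}^n Σ_{i=1}^n β_j β_i e^{b_j + b_i} ε(w_{j,k}) ε(w_{i,k}) ( ∏_{r≠k} ε(w_{j,r} + w_{i,r}) − ∏_{r≠k} ε(w_{j,r}) ε(w_{i,r}) ). -/

import Mathlib

open MeasureTheory Real

/-- The function ε(t) = (e^t − 1)/t for t ≠ 0, and ε(0) = 1. -/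
noncomputable def eps (t : ℝ) : ℝ := if t = 0 then 1 else (Real.exp t - 1) / t

/-- ELM surrogate with exponential activation:
`f̂(x) = Σ_{j=1}^n β_j exp(w_jᵀ x + b_j)`. -/
noncomputable def elm {d n : ℕ} (β b : Fin n → ℝ) (w : Fin n → Fin d → ℝ)
    (x : Fin d → ℝ) : ℝ :=
  ∑ j, β j * Real.exp ((∑ l, w j l * x l) + b j)


/-- `h_k(x) = E(f̂ | x_l, l ≠ k)`: the integral of the ELM surrogate over the
`k`-th coordinate with the remaining coordinates fixed. -/
noncomputable def hk {d n : ℕ} (β b : Fin n → ℝ) (w : Fin n → Fin d → ℝ)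
    (k : Fin d) (x : Fin d → ℝ) : ℝ :=
  ∫ t in Set.Icc (0 : ℝ) 1, elm β b w (Function.update x k t)

/-- Variance of the ELM surrogate over the uniform measure on `[0,1]^d`. -/
noncomputable def elmVar {d n : ℕ} (β b : Fin n → ℝ) (w : Fin n → Fin d → ℝ) : ℝ :=
  (∫ x in Set.Icc (0 : Fin d → ℝ) 1, (elm β b w x) ^ 2) -
    (∫ x in Set.Icc (0 : Fin d → ℝ) 1, elm β b w x) ^ 2

/-! The integrand `exp (∑ l, c l * x l)` factorises over the coordinates, so by Fubini its
integral over the unit cube is `∏ l, ε (c l)`. Integrating out `x_k` turns `f̂` into an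
exponential sum `h_k` in the remaining coordinates, and `h_k ^ 2` is again an exponential sum,
with frequencies `w_j + w_i`; hence both moments of `h_k` are explicit sums of products of `ε`. -/

open Finset

theorem integral_Icc_exp_mul (c : ℝ) : ∫ t in Set.Icc (0 : ℝ) 1, exp (c * t) = eps c := by
  rw [integral_Icc_eq_integral_Ioc, ← intervalIntegral.integral_of_le zero_le_one]
  by_cases hc : c = 0
  · simp [hc, eps]
  · rw [intervalIntegral.integral_comp_mul_left (fun x => exp x) hc]
    simp [integral_exp, eps, hc, div_eq_inv_mul]

theorem integral_Icc_pi_prod {ι : Type*} [Fintype ι] (f : ι → ℝ → ℝ) :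
    ∫ x in Set.Icc (0 : ι → ℝ) 1, ∏ i, f i (x i) = ∏ i, ∫ t in Set.Icc (0 : ℝ) 1, f i t := by
  rw [← Set.pi_univ_Icc, volume_pi, Measure.restrict_pi_pi]
  exact integral_fintype_prod_eq_prod f

section ExpSums

variable {ι J : Type*} [Fintype J]

theorem integral_Icc_exp_sum_mul [Fintype ι] [DecidableEq ι] (s : Finset ι) (c : ι → ℝ) :
    ∫ x in Set.Icc (0 : ι → ℝ) 1, exp (∑ l ∈ s, c l * x l) = ∏ l ∈ s, eps (c l) := by
  have hexp (x : ι → ℝ) :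
      exp (∑ l ∈ s, c l * x l) = ∏ l, if l ∈ s then exp (c l * x l) else 1 := by
    rw [prod_ite_mem, univ_inter, exp_sum]
  have hfactor (l : ι) : (∫ t in Set.Icc (0 : ℝ) 1, if l ∈ s then exp (c l * t) else 1) =
      if l ∈ s then eps (c l) else 1 := by
    split_ifs <;> simp [integral_Icc_exp_mul]
  simp_rw [hexp]
  rw [integral_Icc_pi_prod fun l t => if l ∈ s then exp (c l * t) else 1]
  simp only [hfactor, prod_ite_mem, univ_inter]

theorem integral_Icc_sum_mul_exp [Fintype ι] [DecidableEq ι] (s : Finset ι) (a : J → ℝ) (c : J → ι → ℝ) :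
    ∫ x in Set.Icc (0 : ι → ℝ) 1, ∑ j, a j * exp (∑ l ∈ s, c j l * x l) =
      ∑ j, a j * ∏ l ∈ s, eps (c j l) := by
  rw [integral_finsetSum _ fun j _ => Continuous.integrableOn_Icc (by fun_prop)]
  simp only [integral_const_mul, integral_Icc_exp_sum_mul]

theorem sq_sum_mul_exp (s : Finset ι) (a : J → ℝ) (c : J → ι → ℝ) (x : ι → ℝ) :
    (∑ j, a j * exp (∑ l ∈ s, c j l * x l)) ^ 2 =
      ∑ p : J × J, a p.1 * a p.2 * exp (∑ l ∈ s, (c p.1 l + c p.2 l) * x l) := by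
  simp only [sq, sum_mul_sum, Fintype.sum_prod_type, add_mul, sum_add_distrib, exp_add]
  exact sum_congr rfl fun _ _ => sum_congr rfl fun _ _ => by ring

end ExpSums

theorem sum_mul_update {ι : Type*} [Fintype ι] [DecidableEq ι] (c x : ι → ℝ) (k : ι) (t : ℝ) :
    ∑ l, c l * Function.update x k t l = c k * t + ∑ l ∈ univ.erase k, c l * x l := by
  rw [← add_sum_erase _ _ (mem_univ k), Function.update_self]
  congr 1
  exact sum_congr rfl fun l hl => by rw [Function.update_of_ne (ne_of_mem_erase hl)]

theorem hk_eq_sum_mul_exp {d n : ℕ} (β b : Fin n → ℝ) (w : Fin n → Fin d → ℝ) (k : Fin d)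
    (x : Fin d → ℝ) :
    hk β b w k x = ∑ j, β j * exp (b j) * eps (w j k) *
      exp (∑ l ∈ univ.erase k, w j l * x l) := by
  have helm (t : ℝ) : elm β b w (Function.update x k t) =
      ∑ j, β j * exp (b j) * exp (∑ l ∈ univ.erase k, w j l * x l) * exp (w j k * t) := by
    refine sum_congr rfl fun j _ => ?_
    rw [sum_mul_update, exp_add, exp_add]
    ring
  simp only [hk, helm]
  rw [integral_finsetSum _ fun j _ => Continuous.integrableOn_Icc (by fun_prop)]
  refine sum_congr rfl fun j _ => ?_
  rw [integral_const_mul, integral_Icc_exp_mul]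
  ring

theorem variance_hk {d n : ℕ} (β b : Fin n → ℝ) (w : Fin n → Fin d → ℝ) (k : Fin d) :
    (∫ x in Set.Icc (0 : Fin d → ℝ) 1, (hk β b w k x) ^ 2) -
        (∫ x in Set.Icc (0 : Fin d → ℝ) 1, hk β b w k x) ^ 2 =
      ∑ j, ∑ i, β j * β i * exp (b j + b i) * (eps (w j k) * eps (w i k)) *
        ((∏ r ∈ univ.erase k, eps (w j r + w i r)) -
          ∏ r ∈ univ.erase k, eps (w j r) * eps (w i r)) := by
  simp only [hk_eq_sum_mul_exp, sq_sum_mul_exp, integral_Icc_sum_mul_exp]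
  rw [Fintype.sum_prod_type, sq, sum_mul_sum, ← sum_sub_distrib]
  refine sum_congr rfl fun j _ => ?_
  rw [← sum_sub_distrib]
  refine sum_congr rfl fun i _ => ?_
  rw [prod_mul_distrib, exp_add]
  ring

theorem elm_total_sobol_general (d n : ℕ)
    (β b : Fin n → ℝ) (w : Fin n → Fin d → ℝ) (k : Fin d) :
    1 - ((∫ x in Set.Icc (0 : Fin d → ℝ) 1, (hk β b w k x) ^ 2) -
          (∫ x in Set.Icc (0 : Fin d → ℝ) 1, hk β b w k x) ^ 2) / elmVar β b w =
      1 - (1 / elmVar β b w) *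
        ∑ j, ∑ i, β j * β i * Real.exp (b j + b i) *
          (eps (w j k) * eps (w i k)) *
          ((∏ r ∈ Finset.univ.erase k, eps (w j r + w i r)) -
            ∏ r ∈ Finset.univ.erase k, eps (w j r) * eps (w i r)) := by
  rw [variance_hk]
  ring

/-- Assuming `var(f̂) ≠ 0`, the total Sobol' index
`S_k^tot = 1 − var(E(f̂ | x_l, l ≠ k)) / var(f̂)` of the ELM surrogate satisfies
`S_k^tot = 1 − (1/var(f̂)) Σ_j Σ_i β_j β_i e^{b_j+b_i} ε(w_{j,k}) ε(w_{i,k})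
  (∏_{r≠k} ε(w_{j,r}+w_{i,r}) − ∏_{r≠k} ε(w_{j,r}) ε(w_{i,r}))`. -/
theorem elm_total_sobol (d n : ℕ) (hd : 0 < d) (hn : 0 < n)
    (β b : Fin n → ℝ) (w : Fin n → Fin d → ℝ) (k : Fin d)
    (hvar : elmVar β b w ≠ 0) :
    1 - ((∫ x in Set.Icc (0 : Fin d → ℝ) 1, (hk β b w k x) ^ 2) -
          (∫ x in Set.Icc (0 : Fin d → ℝ) 1, hk β b w k x) ^ 2) / elmVar β b w =
      1 - (1 / elmVar β b w) *
        ∑ j, ∑ i, β j * β i * Real.exp (b j + b i) *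
          (eps (w j k) * eps (w i k)) *
          ((∏ r ∈ Finset.univ.erase k, eps (w j r + w i r)) -
            ∏ r ∈ Finset.univ.erase k, eps (w j r) * eps (w i r)) :=
  elm_total_sobol_general d n β b w k
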